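/- The expected loss is monotone nondecreasing in the attack coefficient: if α₁ ≤ α₂ and C^{(1)}, C^{(2)} are the solutions of the SCS model with attack coefficients α₁, α₂ respectively (all other data equal, initial condition in [0,1]^N), then C_i^{(1)}(t) ≤ C_i^{(2)}(t) for all i, t ∈ [0,T], and hence L(x; G, α₁, β, δ, γ, T) ≤ L(x; G, α₂, β, δ, γ, T). -/

import Mathlib

/-!
Write `e = C¹ - C²`. On `[0,1]^N` the field `scsF` is increasing in `α` and cooperative
(`∂Fᵢ/∂Cⱼ ≥ 0` for `j ≠ i`), and it is Lipschitz there, so every component satisfies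
`eᵢ' ≤ Kᵢ ∑ⱼ eⱼ⁺` wherever `eᵢ ≥ 0`. The sum `∑ⱼ eⱼ⁺` then obeys a linear Grönwall
inequality from `0`, so it vanishes and `C¹ ≤ C²`. The same argument applied to `-C` and to
`C - 1` shows that `[0,1]^N` is invariant, and the loss comparison follows since `w ≥ 0`.
-/

open Set Filter Topology

/-- The right-hand side of the SCS model. -/
noncomputable def scsF {N : ℕ} (a : Fin N → Fin N → ℝ) (w x : Fin N → ℝ) (α β δ γ : ℝ)
    (C : Fin N → ℝ) : Fin N → ℝ :=
  fun i => (1 / (δ * w i)) * (α * x i + β * ∑ j, a j i * C j) * (1 - C i) - γ * w i * C i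

lemma mul_le_max_zero_of_mem_Icc {c d : ℝ} (hc : c ∈ Icc 0 1) : c * d ≤ max d 0 := by
  rcases le_total 0 d with hd | hd
  · exact (mul_le_of_le_one_left hd hc.2).trans (le_max_left d 0)
  · exact (mul_nonpos_of_nonneg_of_nonpos hc.1 hd).trans (le_max_right d 0)

lemma eventually_slope_max_zero_lt {f : ℝ → ℝ} {f' b r t : ℝ} (hf : HasDerivAt f f' t)
    (hb : 0 ≤ b) (hf' : 0 ≤ f t → f' ≤ b) (hr : b < r) :
    ∀ᶠ z in 𝓝[>] t, (z - t)⁻¹ * (max (f z) 0 - max (f t) 0) < r := by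
  rcases lt_or_ge (f t) 0 with hneg | hnonneg
  · have hfz : ∀ᶠ z in 𝓝 t, f z < 0 := hf.continuousAt.eventually_lt_const hneg
    filter_upwards [nhdsWithin_le_nhds hfz] with z hz
    rw [max_eq_right hz.le, max_eq_right hneg.le, sub_self, mul_zero]
    linarith
  · have hslope : ∀ᶠ z in 𝓝[>] t, slope f t z < r :=
      (hasDerivAt_iff_tendsto_slope.mp hf).eventually_lt_const ((hf' hnonneg).trans_lt hr)
        |>.filter_mono (nhdsWithin_mono t fun z hz => ne_of_gt hz)
    filter_upwards [hslope, self_mem_nhdsWithin] with z hz (hzt : t < z)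
    have hinv : 0 ≤ (z - t)⁻¹ := inv_nonneg.2 (sub_pos.2 hzt).le
    calc (z - t)⁻¹ * (max (f z) 0 - max (f t) 0)
        ≤ (z - t)⁻¹ * max (f z - f t) 0 := by
          simpa using mul_le_mul_of_nonneg_left (max_sub_max_le_max (f z) 0 (f t) 0) hinv
      _ = max (slope f t z) 0 := by
          rw [mul_max_of_nonneg _ _ hinv, mul_zero, slope_def_field, div_eq_inv_mul]
      _ < r := max_lt hz (hb.trans_lt hr)

theorem nonpos_of_hasDerivAt_le_mul_sum_max_zero {ι : Type*} [Fintype ι] {e e' : ι → ℝ → ℝ}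
    {K : ι → ℝ} {T : ℝ} (hK : ∀ i, 0 ≤ K i)
    (he : ∀ t ∈ Icc 0 T, ∀ i, HasDerivAt (e i) (e' i t) t) (h0 : ∀ i, e i 0 ≤ 0)
    (hbound : ∀ t ∈ Ico 0 T, ∀ i, 0 ≤ e i t → e' i t ≤ K i * ∑ j, max (e j t) 0) :
    ∀ t ∈ Icc 0 T, ∀ i, e i t ≤ 0 := by
  cases isEmpty_or_nonempty ι with
  | inl _ => exact fun _ _ i => isEmptyElim i
  | inr _ => ?_
  set φ : ℝ → ℝ := fun t => ∑ j, max (e j t) 0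
  have hφ_nonneg : ∀ t, 0 ≤ φ t := fun t => Finset.sum_nonneg fun j _ => le_max_right _ _
  set M : ℝ := (Fintype.card ι : ℝ)
  have hM : 0 < M := Nat.cast_pos.2 Fintype.card_pos
  set L : ℝ := ∑ i, K i
  have hL : 0 ≤ L := Finset.sum_nonneg fun j _ => hK j
  have hKL : ∀ i, K i ≤ L := fun i => Finset.single_le_sum (fun j _ => hK j) (Finset.mem_univ i)
  have hφ_cont : ContinuousOn φ (Icc 0 T) :=
    continuousOn_finsetSum _ fun j _ =>
      (continuousOn_of_forall_continuousAt fun t ht => (he t ht j).continuousAt).sup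
        continuousOn_const
  have hφ_slope : ∀ t ∈ Ico 0 T, ∀ r, M * L * φ t < r →
      ∃ᶠ z in 𝓝[>] t, (z - t)⁻¹ * (φ z - φ t) < r := by
    intro t ht r hr
    have hcomp : ∀ᶠ z in 𝓝[>] t, ∀ i, (z - t)⁻¹ * (max (e i z) 0 - max (e i t) 0) < r / M := by
      refine eventually_all.2 fun i =>
        eventually_slope_max_zero_lt (he t (Ico_subset_Icc_self ht) i)
          (mul_nonneg hL (hφ_nonneg t)) ?_ ?_
      · exact fun h => (hbound t ht i h).trans (mul_le_mul_of_nonneg_right (hKL i) (hφ_nonneg t))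
      · rw [lt_div_iff₀ hM]; linarith
    refine Eventually.frequently ?_
    filter_upwards [hcomp] with z hz
    calc (z - t)⁻¹ * (φ z - φ t)
        = ∑ i, (z - t)⁻¹ * (max (e i z) 0 - max (e i t) 0) := by
          rw [← Finset.sum_sub_distrib, Finset.mul_sum]
      _ < ∑ _i : ι, r / M := Finset.sum_lt_sum_of_nonempty Finset.univ_nonempty fun i _ => hz i
      _ = r := by
          rw [Finset.sum_const, Finset.card_univ, nsmul_eq_mul]
          exact mul_div_cancel₀ r hM.ne'
  have hφ_zero : ∀ t ∈ Icc 0 T, φ t ≤ 0 := by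
    intro t ht
    have := le_gronwallBound_of_liminf_deriv_right_le hφ_cont hφ_slope
      (Finset.sum_nonpos fun j _ => max_le (h0 j) le_rfl) (fun _ _ => (add_zero _).ge) t ht
    rwa [gronwallBound_ε0_δ0] at this
  intro t ht i
  exact (le_max_left _ _).trans <|
    (Finset.single_le_sum (fun j _ => le_max_right (e j t) 0) (Finset.mem_univ i)).trans
      (hφ_zero t ht)

section SCS

variable {N : ℕ} {a : Fin N → Fin N → ℝ} {w x : Fin N → ℝ} {β δ γ : ℝ}

lemma neg_scsF_le_of_nonpos {α B : ℝ} {C : Fin N → ℝ} {i : Fin N}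
    (ha : ∀ j, a j i ∈ Icc 0 1) (hα : 0 ≤ α) (hβ : 0 ≤ β) (hδ : 0 < δ) (hγ : 0 ≤ γ)
    (hx : 0 ≤ x i) (hw : 0 < w i) (hCi : C i ≤ 0) (hB : -C i ≤ B) :
    -scsF a w x α β δ γ C i ≤ β * (1 + B) / (δ * w i) * ∑ j, max (-C j) 0 := by
  set S := ∑ j, max (-C j) 0
  have hS : 0 ≤ S := Finset.sum_nonneg fun j _ => le_max_right _ _
  have hpressure : -(α * x i + β * ∑ j, a j i * C j) ≤ β * S := by
    have : -∑ j, a j i * C j ≤ S := by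
      rw [← Finset.sum_neg_distrib]
      exact Finset.sum_le_sum fun j _ => by
        simpa only [mul_neg] using mul_le_max_zero_of_mem_Icc (d := -C j) (ha j)
    linarith [mul_nonneg hα hx, mul_le_mul_of_nonneg_left this hβ]
  have hdw : 0 < δ * w i := mul_pos hδ hw
  have hloss : 0 ≤ -(γ * w i * C i) := by
    have := mul_nonpos_of_nonneg_of_nonpos (mul_nonneg hγ hw.le) hCi; linarith
  calc -scsF a w x α β δ γ C i
      = (-(α * x i + β * ∑ j, a j i * C j) * (1 - C i) + δ * w i * (γ * w i * C i)) /
          (δ * w i) := by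
        simp only [scsF]; field_simp; ring
    _ ≤ β * S * (1 + B) / (δ * w i) := by
        gcongr
        linarith [mul_le_mul_of_nonneg_right hpressure (by linarith : 0 ≤ 1 - C i),
          mul_nonneg hdw.le hloss, mul_le_mul_of_nonneg_left (by linarith : 1 - C i ≤ 1 + B)
            (mul_nonneg hβ hS)]
    _ = β * (1 + B) / (δ * w i) * S := by ring

lemma scsF_nonpos_of_one_le {α : ℝ} {C : Fin N → ℝ} {i : Fin N}
    (ha : ∀ j, 0 ≤ a j i) (hα : 0 ≤ α) (hβ : 0 ≤ β) (hδ : 0 < δ) (hγ : 0 ≤ γ)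
    (hx : 0 ≤ x i) (hw : 0 < w i) (hC : ∀ j, 0 ≤ C j) (hCi : 1 ≤ C i) :
    scsF a w x α β δ γ C i ≤ 0 := by
  have hpressure : 0 ≤ α * x i + β * ∑ j, a j i * C j :=
    add_nonneg (mul_nonneg hα hx)
      (mul_nonneg hβ (Finset.sum_nonneg fun j _ => mul_nonneg (ha j) (hC j)))
  have hgain : 1 / (δ * w i) * (α * x i + β * ∑ j, a j i * C j) * (1 - C i) ≤ 0 :=
    mul_nonpos_of_nonneg_of_nonpos (by positivity) (by linarith)
  have hloss : 0 ≤ γ * w i * C i := by positivity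
  simp only [scsF]
  linarith

lemma scsF_sub_scsF_le {α₁ α₂ : ℝ} {C D : Fin N → ℝ} {i : Fin N}
    (ha : ∀ j, a j i ∈ Icc 0 1) (hα₁ : 0 ≤ α₁) (hα : α₁ ≤ α₂) (hβ : 0 ≤ β) (hδ : 0 < δ)
    (hγ : 0 ≤ γ) (hx : 0 ≤ x i) (hw : 0 < w i) (hC : ∀ j, 0 ≤ C j) (hD : D i ∈ Icc 0 1)
    (hCD : D i ≤ C i) :
    scsF a w x α₁ β δ γ C i - scsF a w x α₂ β δ γ D i ≤
      β / (δ * w i) * ∑ j, max (C j - D j) 0 := by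
  set S := ∑ j, max (C j - D j) 0
  set A₁ := α₁ * x i + β * ∑ j, a j i * C j
  set A₂ := α₂ * x i + β * ∑ j, a j i * D j
  have hA₁ : 0 ≤ A₁ :=
    add_nonneg (mul_nonneg hα₁ hx)
      (mul_nonneg hβ (Finset.sum_nonneg fun j _ => mul_nonneg (ha j).1 (hC j)))
  have hS : 0 ≤ S := Finset.sum_nonneg fun j _ => le_max_right _ _
  have hA : A₁ - A₂ ≤ β * S := by
    have hsum : ∑ j, a j i * C j - ∑ j, a j i * D j ≤ S := by
      rw [← Finset.sum_sub_distrib]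
      exact Finset.sum_le_sum fun j _ => by
        simpa only [mul_sub] using mul_le_max_zero_of_mem_Icc (d := C j - D j) (ha j)
    linarith [mul_le_mul_of_nonneg_right hα hx, mul_le_mul_of_nonneg_left hsum hβ]
  have hdw : 0 < δ * w i := mul_pos hδ hw
  -- A₁ (1 - C i) - A₂ (1 - D i) = -A₁ (C i - D i) + (A₁ - A₂) (1 - D i)
  have hgain : A₁ * (1 - C i) - A₂ * (1 - D i) ≤ β * S := by
    linarith [mul_nonneg hA₁ (sub_nonneg.2 hCD),
      mul_le_mul_of_nonneg_right hA (sub_nonneg.2 hD.2), mul_nonneg (mul_nonneg hβ hS) hD.1]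
  have hloss : 0 ≤ γ * w i * (C i - D i) := mul_nonneg (mul_nonneg hγ hw.le) (sub_nonneg.2 hCD)
  calc scsF a w x α₁ β δ γ C i - scsF a w x α₂ β δ γ D i
      = (A₁ * (1 - C i) - A₂ * (1 - D i) - δ * w i * (γ * w i * (C i - D i))) / (δ * w i) := by
        simp only [scsF, A₁, A₂]; field_simp; ring
    _ ≤ β * S / (δ * w i) := by
        gcongr
        linarith [mul_nonneg hdw.le hloss]
    _ = β / (δ * w i) * S := by ring

lemma scs_solution_nonneg {α T : ℝ} {C : ℝ → Fin N → ℝ}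
    (ha : ∀ i j, a i j ∈ Icc 0 1) (hα : 0 ≤ α) (hβ : 0 ≤ β) (hδ : 0 < δ) (hγ : 0 ≤ γ)
    (hx : ∀ i, 0 ≤ x i) (hw : ∀ i, 0 < w i)
    (hC : ∀ t ∈ Icc 0 T, HasDerivAt C (scsF a w x α β δ γ (C t)) t) (h0 : ∀ i, 0 ≤ C 0 i) :
    ∀ t ∈ Icc 0 T, ∀ i, 0 ≤ C t i := by
  obtain ⟨B, hB, hCB⟩ : ∃ B > 0, ∀ y ∈ C '' Icc 0 T, ‖y‖ ≤ B :=
    (isCompact_Icc.image_of_continuousOn (continuousOn_of_forall_continuousAt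
      fun t ht => (hC t ht).continuousAt)).isBounded.exists_pos_norm_le
  have hneg : ∀ t ∈ Icc 0 T, ∀ i, -C t i ≤ 0 := by
    refine nonpos_of_hasDerivAt_le_mul_sum_max_zero
      (e' := fun i t => -scsF a w x α β δ γ (C t) i)
      (K := fun i => β * (1 + B) / (δ * w i)) (fun i => by have := hw i; positivity)
      (fun t ht i => (hasDerivAt_pi.1 (hC t ht) i).neg) (fun i => neg_nonpos.2 (h0 i)) ?_
    intro t ht i hi
    have hCB : -C t i ≤ B := (neg_le_abs _).trans <| (norm_le_pi_norm (C t) i).trans <|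
      hCB _ (mem_image_of_mem C (Ico_subset_Icc_self ht))
    exact neg_scsF_le_of_nonpos (fun j => ha j i) hα hβ hδ hγ (hx i) (hw i) (neg_nonneg.1 hi) hCB
  exact fun t ht i => neg_nonpos.1 (hneg t ht i)

lemma scs_solution_mem_Icc {α T : ℝ} {C : ℝ → Fin N → ℝ}
    (ha : ∀ i j, a i j ∈ Icc 0 1) (hα : 0 ≤ α) (hβ : 0 ≤ β) (hδ : 0 < δ) (hγ : 0 ≤ γ)
    (hx : ∀ i, 0 ≤ x i) (hw : ∀ i, 0 < w i)
    (hC : ∀ t ∈ Icc 0 T, HasDerivAt C (scsF a w x α β δ γ (C t)) t)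
    (h0 : ∀ i, C 0 i ∈ Icc 0 1) :
    ∀ t ∈ Icc 0 T, ∀ i, C t i ∈ Icc 0 1 := by
  have hnonneg := scs_solution_nonneg ha hα hβ hδ hγ hx hw hC fun i => (h0 i).1
  have hle : ∀ t ∈ Icc 0 T, ∀ i, C t i - 1 ≤ 0 := by
    refine nonpos_of_hasDerivAt_le_mul_sum_max_zero
      (e' := fun i t => scsF a w x α β δ γ (C t) i)
      (K := 0) (fun _ => le_rfl) (fun t ht i => (hasDerivAt_pi.1 (hC t ht) i).sub_const 1)
      (fun i => sub_nonpos.2 (h0 i).2) ?_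
    intro t ht i hi
    rw [Pi.zero_apply, zero_mul]
    exact scsF_nonpos_of_one_le (fun j => (ha j i).1) hα hβ hδ hγ (hx i) (hw i)
      (hnonneg t (Ico_subset_Icc_self ht)) (sub_nonneg.1 hi)
  exact fun t ht i => ⟨hnonneg t ht i, sub_nonpos.1 (hle t ht i)⟩

lemma scs_solution_le_of_attack_le {α₁ α₂ T : ℝ} {C₁ C₂ : ℝ → Fin N → ℝ}
    (ha : ∀ i j, a i j ∈ Icc 0 1) (hα₁ : 0 ≤ α₁) (hα : α₁ ≤ α₂) (hβ : 0 ≤ β) (hδ : 0 < δ)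
    (hγ : 0 ≤ γ) (hx : ∀ i, 0 ≤ x i) (hw : ∀ i, 0 < w i)
    (hC₁ : ∀ t ∈ Icc 0 T, HasDerivAt C₁ (scsF a w x α₁ β δ γ (C₁ t)) t)
    (hC₂ : ∀ t ∈ Icc 0 T, HasDerivAt C₂ (scsF a w x α₂ β δ γ (C₂ t)) t)
    (h₁ : ∀ i, C₁ 0 i ∈ Icc 0 1) (h₂ : ∀ i, C₂ 0 i ∈ Icc 0 1) (h0 : ∀ i, C₁ 0 i ≤ C₂ 0 i) :
    ∀ t ∈ Icc 0 T, ∀ i, C₁ t i ≤ C₂ t i := by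
  have hbox₁ := scs_solution_mem_Icc ha hα₁ hβ hδ hγ hx hw hC₁ h₁
  have hbox₂ := scs_solution_mem_Icc ha (hα₁.trans hα) hβ hδ hγ hx hw hC₂ h₂
  have hsub : ∀ t ∈ Icc 0 T, ∀ i, C₁ t i - C₂ t i ≤ 0 := by
    refine nonpos_of_hasDerivAt_le_mul_sum_max_zero
      (e' := fun i t => scsF a w x α₁ β δ γ (C₁ t) i - scsF a w x α₂ β δ γ (C₂ t) i)
      (K := fun i => β / (δ * w i)) (fun i => by have := hw i; positivity)
      (fun t ht i => (hasDerivAt_pi.1 (hC₁ t ht) i).sub (hasDerivAt_pi.1 (hC₂ t ht) i))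
      (fun i => sub_nonpos.2 (h0 i)) ?_
    intro t ht i hi
    have ht' := Ico_subset_Icc_self ht
    exact scsF_sub_scsF_le (fun j => ha j i) hα₁ hα hβ hδ hγ (hx i) (hw i)
      (fun j => (hbox₁ t ht' j).1) (hbox₂ t ht' i) (sub_nonneg.1 hi)
  exact fun t ht i => sub_nonpos.1 (hsub t ht i)

end SCS

lemma intervalIntegral_sum_mul_le_of_le {ι : Type*} [Fintype ι] {w : ι → ℝ} {C₁ C₂ : ℝ → ι → ℝ}
    {a b : ℝ} (hab : a ≤ b) (hw : ∀ i, 0 ≤ w i) (h₁ : ContinuousOn C₁ (Icc a b))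
    (h₂ : ContinuousOn C₂ (Icc a b)) (hle : ∀ t ∈ Icc a b, ∀ i, C₁ t i ≤ C₂ t i) :
    ∫ t in a..b, ∑ i, w i * C₁ t i ≤ ∫ t in a..b, ∑ i, w i * C₂ t i := by
  rw [← uIcc_of_le hab] at h₁ h₂
  refine intervalIntegral.integral_mono_on hab (ContinuousOn.intervalIntegrable (by fun_prop))
    (ContinuousOn.intervalIntegrable (by fun_prop)) fun t ht => ?_
  exact Finset.sum_le_sum fun i _ => mul_le_mul_of_nonneg_left (hle t ht i) (hw i)

/-- The expected loss is monotone nondecreasing in the attack coefficient: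
if α₁ ≤ α₂ then the solutions satisfy C¹ ≤ C² componentwise on [0,T], and hence
L(x; G, α₁, β, δ, γ, T) ≤ L(x; G, α₂, β, δ, γ, T). -/
theorem loss_monotone_in_attack_coeff {N : ℕ} (a : Fin N → Fin N → ℝ)
    (ha : ∀ i j, a i j = 0 ∨ a i j = 1)
    (w x : Fin N → ℝ) (α₁ α₂ β δ γ T : ℝ)
    (hα₁ : 0 < α₁) (hα : α₁ ≤ α₂) (hβ : 0 < β) (hδ : 0 < δ) (hγ : 0 < γ)
    (hx : ∀ i, 0 ≤ x i) (hw : ∀ i, 0 < w i) (hT : 0 < T)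
    (C1 C2 : ℝ → Fin N → ℝ)
    (hC1 : ∀ t ∈ Set.Icc (0 : ℝ) T, HasDerivAt C1 (scsF a w x α₁ β δ γ (C1 t)) t)
    (hC2 : ∀ t ∈ Set.Icc (0 : ℝ) T, HasDerivAt C2 (scsF a w x α₂ β δ γ (C2 t)) t)
    (h0 : C1 0 = C2 0) (h0box : ∀ i, C1 0 i ∈ Set.Icc (0 : ℝ) 1) :
    (∀ t ∈ Set.Icc (0 : ℝ) T, ∀ i, C1 t i ≤ C2 t i) ∧
    (∫ t in (0:ℝ)..T, ∑ i, w i * C1 t i) ≤ ∫ t in (0:ℝ)..T, ∑ i, w i * C2 t i := by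
  have ha' : ∀ i j, a i j ∈ Icc 0 1 := fun i j => by rcases ha i j with h | h <;> simp [h]
  have hle : ∀ t ∈ Icc 0 T, ∀ i, C1 t i ≤ C2 t i :=
    scs_solution_le_of_attack_le ha' hα₁.le hα hβ.le hδ hγ.le hx hw hC1 hC2 h0box (h0 ▸ h0box)
      fun i => (congrFun h0 i).le
  refine ⟨hle, intervalIntegral_sum_mul_le_of_le hT.le (fun i => (hw i).le) ?_ ?_ hle⟩
  · exact continuousOn_of_forall_continuousAt fun t ht => (hC1 t ht).continuousAt
  · exact continuousOn_of_forall_continuousAt fun t ht => (hC2 t ht).continuousAt
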